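/- Let p > 0 and let s ∈ ℝ with s ∉ {0, −1}. Let (u, v) be a positive classical solution of the system −Δu = v^p, −Δv = u on ℝ^n (i.e. the Lane–Emden system with q = 1). Then for every φ ∈ C_c²(ℝ^n): ∫ u v^{s−1} |∇v|² φ = (1/s) ∫ u² v^s φ − (1/(s(s+1))) ∫ v^{p+1+s} φ + I₆, where I₆ = (1/(s(s+1))) ∫ v^{s+1} (∇u·∇φ) − (1/s) ∫ u v^s (∇v·∇φ), all integrals being over ℝ^n. -/

import Mathlib

/-!
Test `-Δv = u` against `u v^s φ` and `-Δu = v^p` against `v^(s+1) φ`. After Green's identity both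
tests produce the same cross term `∫ v^s ∇u·∇v φ` (with weights `1` and `s + 1`); eliminating it
and dividing by `s` and `s + 1` gives the formula.
-/

open MeasureTheory Real
open scoped InnerProductSpace

/-- The Laplacian of a function `f : ℝⁿ → ℝ`, as the sum of its second partial
derivatives. -/
noncomputable def lap {n : ℕ} (f : EuclideanSpace ℝ (Fin n) → ℝ)
    (x : EuclideanSpace ℝ (Fin n)) : ℝ :=
  ∑ i : Fin n, fderiv ℝ (fun y => fderiv ℝ f y (EuclideanSpace.single i 1)) x
    (EuclideanSpace.single i 1)

theorem HasCompactSupport.inner_right {X F : Type*} [TopologicalSpace X] [NormedAddCommGroup F]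
    [InnerProductSpace ℝ F] {a b : X → F} (hb : HasCompactSupport b) :
    HasCompactSupport (fun y => ⟪a y, b y⟫_ℝ) :=
  hb.mono fun y hy hb0 => hy (by simp [hb0])

section Gradient

variable {F : Type*} [NormedAddCommGroup F] [InnerProductSpace ℝ F] [CompleteSpace F]
  {f g : F → ℝ} {f' g' x : F}

theorem HasGradientAt.mul (hf : HasGradientAt f f' x) (hg : HasGradientAt g g' x) :
    HasGradientAt (fun y => f y * g y) (f x • g' + g x • f') x := by
  rw [hasGradientAt_iff_hasFDerivAt] at *
  simpa using hf.fun_mul hg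

theorem HasGradientAt.rpow_const (hf : HasGradientAt f f' x) (hx : f x ≠ 0) (t : ℝ) :
    HasGradientAt (fun y => f y ^ t) ((t * f x ^ (t - 1)) • f') x := by
  rw [hasGradientAt_iff_hasFDerivAt] at *
  simpa using hf.rpow_const (p := t) (Or.inl hx)

theorem ContDiff.continuous_gradient (hf : ContDiff ℝ 1 f) : Continuous (gradient f) :=
  (InnerProductSpace.toDual ℝ F).symm.continuous.comp (hf.continuous_fderiv one_ne_zero)

theorem HasCompactSupport.gradient (hf : HasCompactSupport f) :
    HasCompactSupport (gradient f) :=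
  (hf.fderiv ℝ).comp_left (g := (InnerProductSpace.toDual ℝ F).symm) (map_zero _)

end Gradient

section Euclidean

variable {n : ℕ} {f g a u v φ : EuclideanSpace ℝ (Fin n) → ℝ}

theorem inner_gradient_eq_sum_fderiv_mul_fderiv (f g : EuclideanSpace ℝ (Fin n) → ℝ)
    (x : EuclideanSpace ℝ (Fin n)) :
    ⟪gradient f x, gradient g x⟫_ℝ = ∑ i, fderiv ℝ f x (EuclideanSpace.single i 1) *
      fderiv ℝ g x (EuclideanSpace.single i 1) := by
  rw [← (EuclideanSpace.basisFun (Fin n) ℝ).sum_inner_mul_inner]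
  simp [inner_gradient_left]

/-- Green's first identity. -/
theorem integral_mul_lap_eq_neg_integral_inner_gradient (hf : ContDiff ℝ 2 f)
    (hg : ContDiff ℝ 1 g) (hgc : HasCompactSupport g) :
    ∫ x, g x * lap f x = -∫ x, ⟪gradient f x, gradient g x⟫_ℝ := by
  set e : Fin n → EuclideanSpace ℝ (Fin n) := fun i => EuclideanSpace.single i 1
  have hdf : ∀ i, ContDiff ℝ 1 (fun y => fderiv ℝ f y (e i)) := fun i =>
    (hf.fderiv_right (m := 1) le_rfl).clm_apply contDiff_const
  have hdg : ∀ i, Continuous (fun y => fderiv ℝ g y (e i)) := fun i =>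
    (hg.continuous_fderiv one_ne_zero).clm_apply continuous_const
  have hdg_int : ∀ i, Integrable (fun x => fderiv ℝ g x (e i) * fderiv ℝ f x (e i)) :=
    fun i => ((hdg i).mul (hdf i).continuous).integrable_of_hasCompactSupport
      (hgc.fderiv_apply ℝ (e i)).mul_right
  have hddf_int : ∀ i,
      Integrable (fun x => g x * fderiv ℝ (fun y => fderiv ℝ f y (e i)) x (e i)) :=
    fun i => (hg.continuous.mul ((hdf i).continuous_fderiv one_ne_zero |>.clm_apply
      continuous_const)).integrable_of_hasCompactSupport hgc.mul_right
  calc ∫ x, g x * lap f x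
      = ∑ i, ∫ x, g x * fderiv ℝ (fun y => fderiv ℝ f y (e i)) x (e i) := by
        simp_rw [lap, Finset.mul_sum]
        exact integral_finsetSum _ fun i _ => hddf_int i
    _ = ∑ i, -∫ x, fderiv ℝ g x (e i) * fderiv ℝ f x (e i) := by
        refine Finset.sum_congr rfl fun i _ => ?_
        exact integral_mul_fderiv_eq_neg_fderiv_mul_of_integrable (hdg_int i) (hddf_int i)
          ((hg.continuous.mul (hdf i).continuous).integrable_of_hasCompactSupport hgc.mul_right)
          (fun x _ => hg.differentiable one_ne_zero x)
          (fun x _ => (hdf i).differentiable one_ne_zero x)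
    _ = -∫ x, ⟪gradient f x, gradient g x⟫_ℝ := by
        simp_rw [inner_gradient_eq_sum_fderiv_mul_fderiv f g, mul_comm (fderiv ℝ f _ _)]
        rw [integral_finsetSum _ fun i _ => hdg_int i, Finset.sum_neg_distrib]

theorem neg_integral_mul_mul_lap (hf : ContDiff ℝ 2 f) (ha : ContDiff ℝ 1 a)
    (hφ : ContDiff ℝ 1 φ) (hφc : HasCompactSupport φ) :
    -∫ x, a x * φ x * lap f x = (∫ x, ⟪gradient f x, gradient a x⟫_ℝ * φ x)
      + ∫ x, a x * ⟪gradient f x, gradient φ x⟫_ℝ := by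
  have hgrad : ∀ x, ⟪gradient f x, gradient (fun y => a y * φ y) x⟫_ℝ
      = ⟪gradient f x, gradient a x⟫_ℝ * φ x + a x * ⟪gradient f x, gradient φ x⟫_ℝ := by
    intro x
    rw [((ha.differentiable one_ne_zero x).hasGradientAt.mul
      (hφ.differentiable one_ne_zero x).hasGradientAt).gradient]
    simp only [inner_add_right, inner_smul_right]
    ring
  have hf1 : ContDiff ℝ 1 f := hf.of_le one_le_two
  rw [integral_mul_lap_eq_neg_integral_inner_gradient hf (ha.mul hφ) hφc.mul_left, neg_neg]
  simp_rw [hgrad]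
  exact integral_add
    (((hf1.continuous_gradient.inner ha.continuous_gradient).mul
      hφ.continuous).integrable_of_hasCompactSupport hφc.mul_left)
    ((ha.continuous.mul (hf1.continuous_gradient.inner
      hφ.continuous_gradient)).integrable_of_hasCompactSupport hφc.gradient.inner_right.mul_left)

theorem neg_integral_mul_rpow_mul_lap (s : ℝ) (hu : ContDiff ℝ 1 u) (hv : ContDiff ℝ 2 v)
    (hv0 : ∀ x, v x ≠ 0) (hφ : ContDiff ℝ 1 φ) (hφc : HasCompactSupport φ) :
    -∫ x, u x * v x ^ s * φ x * lap v x
      = (∫ x, v x ^ s * ⟪gradient u x, gradient v x⟫_ℝ * φ x)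
        + s * (∫ x, u x * v x ^ (s - 1) * ‖gradient v x‖ ^ 2 * φ x)
        + ∫ x, u x * v x ^ s * ⟪gradient v x, gradient φ x⟫_ℝ := by
  have hv1 : ContDiff ℝ 1 v := hv.of_le one_le_two
  have hgrad : ∀ x, ⟪gradient v x, gradient (fun y => u y * v y ^ s) x⟫_ℝ * φ x
      = v x ^ s * ⟪gradient u x, gradient v x⟫_ℝ * φ x
        + s * (u x * v x ^ (s - 1) * ‖gradient v x‖ ^ 2 * φ x) := by
    intro x
    rw [((hu.differentiable one_ne_zero x).hasGradientAt.mul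
      ((hv1.differentiable one_ne_zero x).hasGradientAt.rpow_const (hv0 x) s)).gradient]
    simp only [inner_add_right, inner_smul_right, real_inner_self_eq_norm_sq,
      real_inner_comm (gradient u x)]
    ring
  rw [neg_integral_mul_mul_lap hv (hu.mul (hv1.rpow_const_of_ne hv0)) hφ hφc]
  simp_rw [hgrad]
  rw [integral_add, integral_const_mul]
  · exact ((hv1.rpow_const_of_ne hv0).continuous.mul (hu.continuous_gradient.inner
      hv1.continuous_gradient)).mul hφ.continuous |>.integrable_of_hasCompactSupport hφc.mul_left
  · exact (((hu.continuous.mul (hv1.rpow_const_of_ne hv0).continuous).mul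
      (hv1.continuous_gradient.norm.pow 2)).mul hφ.continuous).integrable_of_hasCompactSupport
      hφc.mul_left |>.const_mul s

theorem neg_integral_rpow_mul_lap (s : ℝ) (hu : ContDiff ℝ 2 u) (hv : ContDiff ℝ 1 v)
    (hv0 : ∀ x, v x ≠ 0) (hφ : ContDiff ℝ 1 φ) (hφc : HasCompactSupport φ) :
    -∫ x, v x ^ (s + 1) * φ x * lap u x
      = (s + 1) * (∫ x, v x ^ s * ⟪gradient u x, gradient v x⟫_ℝ * φ x)
        + ∫ x, v x ^ (s + 1) * ⟪gradient u x, gradient φ x⟫_ℝ := by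
  have hgrad : ∀ x, ⟪gradient u x, gradient (fun y => v y ^ (s + 1)) x⟫_ℝ * φ x
      = (s + 1) * (v x ^ s * ⟪gradient u x, gradient v x⟫_ℝ * φ x) := by
    intro x
    rw [((hv.differentiable one_ne_zero x).hasGradientAt.rpow_const (hv0 x) (s + 1)).gradient,
      add_sub_cancel_right, inner_smul_right]
    ring
  rw [neg_integral_mul_mul_lap hu (hv.rpow_const_of_ne hv0) hφ hφc]
  simp_rw [hgrad, integral_const_mul]

end Euclidean

theorem key_estimates_biharmonic_general (n : ℕ) (p s : ℝ)
    (hs0 : s ≠ 0) (hs1 : s ≠ -1)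
    (u v : EuclideanSpace ℝ (Fin n) → ℝ)
    (hu : ContDiff ℝ 2 u) (hv : ContDiff ℝ 2 v)
    (hv0 : ∀ x, 0 < v x)
    (hue : ∀ x, -lap u x = v x ^ p) (hve : ∀ x, -lap v x = u x)
    (φ : EuclideanSpace ℝ (Fin n) → ℝ) (hφ : ContDiff ℝ 2 φ)
    (hφc : HasCompactSupport φ) :
    (∫ x, u x * v x ^ (s - 1) * ‖gradient v x‖ ^ 2 * φ x)
    = (1 / s) * (∫ x, u x ^ (2 : ℕ) * v x ^ s * φ x)
      - (1 / (s * (s + 1))) * (∫ x, v x ^ (p + 1 + s) * φ x)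
      + ((1 / (s * (s + 1))) *
          (∫ x, v x ^ (s + 1) * ⟪gradient u x, gradient φ x⟫_ℝ)
        - (1 / s) *
          (∫ x, u x * v x ^ s * ⟪gradient v x, gradient φ x⟫_ℝ)) := by
  have hv_ne : ∀ x, v x ≠ 0 := fun x => (hv0 x).ne'
  have hφ1 : ContDiff ℝ 1 φ := hφ.of_le one_le_two
  have hB : (∫ x, u x ^ (2 : ℕ) * v x ^ s * φ x) = -∫ x, u x * v x ^ s * φ x * lap v x := by
    rw [← integral_neg]
    congr 1 with x
    rw [← hve x]
    ring
  have hC : (∫ x, v x ^ (p + 1 + s) * φ x) = -∫ x, v x ^ (s + 1) * φ x * lap u x := by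
    rw [← integral_neg]
    congr 1 with x
    rw [← neg_neg (lap u x), hue x, show p + 1 + s = s + 1 + p by ring, rpow_add (hv0 x)]
    ring
  rw [hB, hC, neg_integral_mul_rpow_mul_lap s (hu.of_le one_le_two) hv hv_ne hφ1 hφc,
    neg_integral_rpow_mul_lap s hu (hv.of_le one_le_two) hv_ne hφ1 hφc]
  have hs_add_one : s + 1 ≠ 0 := fun h => hs1 (eq_neg_of_add_eq_zero_left h)
  field_simp [hs0, hs_add_one]
  ring

theorem key_estimates_biharmonic (n : ℕ) (p s : ℝ) (hp : 0 < p)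
    (hs0 : s ≠ 0) (hs1 : s ≠ -1)
    (u v : EuclideanSpace ℝ (Fin n) → ℝ)
    (hu : ContDiff ℝ 2 u) (hv : ContDiff ℝ 2 v)
    (hu0 : ∀ x, 0 < u x) (hv0 : ∀ x, 0 < v x)
    (hue : ∀ x, -lap u x = v x ^ p) (hve : ∀ x, -lap v x = u x)
    (φ : EuclideanSpace ℝ (Fin n) → ℝ) (hφ : ContDiff ℝ 2 φ)
    (hφc : HasCompactSupport φ) :
    (∫ x, u x * v x ^ (s - 1) * ‖gradient v x‖ ^ 2 * φ x)
    = (1 / s) * (∫ x, u x ^ (2 : ℕ) * v x ^ s * φ x)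
      - (1 / (s * (s + 1))) * (∫ x, v x ^ (p + 1 + s) * φ x)
      + ((1 / (s * (s + 1))) *
          (∫ x, v x ^ (s + 1) * ⟪gradient u x, gradient φ x⟫_ℝ)
        - (1 / s) *
          (∫ x, u x * v x ^ s * ⟪gradient v x, gradient φ x⟫_ℝ)) :=
  key_estimates_biharmonic_general n p s hs0 hs1 u v hu hv hv0 hue hve φ hφ hφc
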